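/- arXiv:math/0311296 — 6 statements merged into one kernel-verified Lean document; each statement's English description precedes it below -/
import Mathlib

section
/- If integers q, p, a satisfy q^2 - a*p^2 = 4 with p and q both odd, then x = p*(q^2-1)/2 and y = q*(q^2-3)/2 are integers satisfying y^2 - a*x^2 = 1. -/
/-! `ε = (q + p√a)/2` has norm `(q² - a p²)/4 = 1`, hence so does `ε³ = y + x√a`. The cube has
integer coordinates because `q` odd makes both `q² - 1` and `q² - 3` even. -/

theorem sq_sub_mul_sq_cube_eq_four {R : Type*} [CommRing R] {a p q : R}
    (h : q^2 - a*p^2 = 4) : (q*(q^2 - 3))^2 - a*(p*(q^2 - 1))^2 = 4 := by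
  linear_combination (q^2 - 1)^2 * h

theorem euler_lemma_pos_four_general (a p q : ℤ) (hq : Odd q)
    (h : q^2 - a*p^2 = 4) :
    ∃ x y : ℤ, 2*x = p*(q^2 - 1) ∧ 2*y = q*(q^2 - 3) ∧ y^2 - a*x^2 = 1 := by
  obtain ⟨k, rfl⟩ := hq
  refine ⟨p*(2*k^2 + 2*k), (2*k + 1)*(2*k^2 + 2*k - 1), by ring, by ring, ?_⟩
  have hcube := sq_sub_mul_sq_cube_eq_four h
  linarith

theorem euler_lemma_pos_four (a p q : ℤ) (hp : Odd p) (hq : Odd q)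
    (h : q^2 - a*p^2 = 4) :
    ∃ x y : ℤ, 2*x = p*(q^2 - 1) ∧ 2*y = q*(q^2 - 3) ∧ y^2 - a*x^2 = 1 :=
  euler_lemma_pos_four_general a p q hq h
end

section
/- Let d be a natural number such that x^2 - d*y^2 = -1 has an integer solution. Then d is a sum of two squares. -/
theorem ZMod.isSquare_neg_one_of_sq_sub_mul_sq_eq_neg_one {d : ℕ} {x y : ℤ}
    (h : x ^ 2 - d * y ^ 2 = -1) : IsSquare (-1 : ZMod d) := by
  refine ⟨x, ?_⟩
  have h' := congrArg (Int.cast : ℤ → ZMod d) h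
  push_cast at h'
  rw [ZMod.natCast_self, zero_mul, sub_zero] at h'
  rw [← h', sq]

theorem negPell_sum_of_two_squares (d : ℕ)
    (h : ∃ x y : ℤ, x^2 - (d : ℤ)*y^2 = -1) :
    ∃ a b : ℕ, d = a^2 + b^2 := by
  obtain ⟨x, y, hxy⟩ := h
  exact Nat.eq_sq_add_sq_of_isSquare_mod_neg_one
    (ZMod.isSquare_neg_one_of_sq_sub_mul_sq_eq_neg_one hxy)
end

section
/- Let d = r^2 + s^2 be a sum of two squares (r, s integers). If the equation s*m^2 - 2*r*m*n - s*n^2 = ±1 has an integer solution (m, n), then x^2 - d*y^2 = -1 has an integer solution with y = m^2 + n^2. -/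
/-- Multiplicativity of the norm of Gaussian integers, applied to `(r - s i) (m + n i) ^ 2`. -/
theorem sq_add_sq_eq_sq_add_sq_mul_sq_add_sq_sq {R : Type*} [CommRing R] (r s m n : R) :
    (r*(m^2 - n^2) + 2*s*m*n)^2 + (s*m^2 - 2*r*m*n - s*n^2)^2 = (r^2 + s^2)*(m^2 + n^2)^2 := by
  ring

theorem hart_proposition (d r s m n : ℤ) (hd : d = r^2 + s^2)
    (h : s*m^2 - 2*r*m*n - s*n^2 = 1 ∨ s*m^2 - 2*r*m*n - s*n^2 = -1) :
    ∃ x : ℤ, x^2 - d*(m^2 + n^2)^2 = -1 := by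
  refine ⟨r*(m^2 - n^2) + 2*s*m*n, ?_⟩
  have hunit : (s*m^2 - 2*r*m*n - s*n^2)^2 = 1 := by
    rcases h with h | h <;> rw [h] <;> norm_num
  rw [hd, ← sq_add_sq_eq_sq_add_sq_mul_sq_add_sq_sq, hunit]
  ring
end

section
/- If integers m, n, α, β satisfy n*α^2 - 2*m*α*β + 2*n*β^2 = ±1, and A = m^2 - 2*n^2, then z = m*α^2 - 4*n*α*β + 2*m*β^2 and t = α^2 - 2*β^2 satisfy z^2 - A*t^2 = 2. -/
theorem gerardin_identity {R : Type*} [CommRing R] (m n α β : R) :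
    (m*α^2 - 4*n*α*β + 2*m*β^2)^2 - (m^2 - 2*n^2)*(α^2 - 2*β^2)^2
      = 2 * (n*α^2 - 2*m*α*β + 2*n*β^2)^2 := by
  ring

theorem gerardin_construction_b (m n α β : ℤ)
    (h : n*α^2 - 2*m*α*β + 2*n*β^2 = 1 ∨ n*α^2 - 2*m*α*β + 2*n*β^2 = -1) :
    (m*α^2 - 4*n*α*β + 2*m*β^2)^2 - (m^2 - 2*n^2)*(α^2 - 2*β^2)^2 = 2 := by
  rw [gerardin_identity, sq_eq_one_iff.mpr h, mul_one]
end

section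
/- If integers a, b, k, x, y satisfy a*x^2 + 2*b*x*y - k*a*y^2 = 1 or a*x^2 + 2*b*x*y - k*a*y^2 = -1, then setting δ = k*a^2 + b^2, the pair X = -b*x^2 + 2*a*k*x*y + k*b*y^2, Y = x^2 + k*y^2 satisfies X^2 - δ*Y^2 = -k. -/
theorem bapoungue_identity {R : Type*} [CommRing R] (a b k x y : R) :
    (-b*x^2 + 2*a*k*x*y + k*b*y^2)^2 - (k*a^2 + b^2)*(x^2 + k*y^2)^2
      = -k * (a*x^2 + 2*b*x*y - k*a*y^2)^2 := by
  ring

theorem bapoungue_theorem (a b k x y : ℤ)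
    (h : a*x^2 + 2*b*x*y - k*a*y^2 = 1 ∨ a*x^2 + 2*b*x*y - k*a*y^2 = -1) :
    (-b*x^2 + 2*a*k*x*y + k*b*y^2)^2 - (k*a^2 + b^2)*(x^2 + k*y^2)^2 = -k := by
  rw [bapoungue_identity, sq_eq_one_iff.mpr h, mul_one]
end

section
/- Let d be a squarefree positive integer such that x^2 - d*y^2 = -1 has an integer solution. Then there exist integers a, b with d = a^2 + b^2, a odd, and for every prime p dividing d, a is a quadratic residue modulo p. -/
set_option synthInstance.maxHeartbeats 1000000
set_option maxHeartbeats 1000000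

open Zsqrtd

local notation "ℤi" => GaussianInt

namespace NegPellAux

lemma norm_dvd_of_dvd {z w : ℤi} (h : z ∣ w) : z.norm ∣ w.norm := by
  obtain ⟨c, rfl⟩ := h
  rw [Zsqrtd.norm_mul]
  exact dvd_mul_right _ _

lemma dvd_star {z w : ℤi} (h : z ∣ w) : star z ∣ star w := by
  obtain ⟨c, rfl⟩ := h
  exact ⟨star c, by rw [star_mul, mul_comm]⟩

lemma prime_of_norm_prime {z : ℤi} (hz : Prime z.norm) : Prime z := by
  rw [← irreducible_iff_prime]
  constructor
  · intro hu
    rw [← Zsqrtd.norm_eq_one_iff] at hu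
    rw [Int.prime_iff_natAbs_prime] at hz
    rw [hu] at hz
    exact hz.one_lt.ne' rfl
  · intro s t hst
    rw [Int.prime_iff_natAbs_prime, hst, Zsqrtd.norm_mul, Int.natAbs_mul] at hz
    rcases (Nat.prime_mul_iff.mp hz) with ⟨_, h1⟩ | ⟨_, h1⟩
    · exact Or.inr (Zsqrtd.norm_eq_one_iff.mp h1)
    · exact Or.inl (Zsqrtd.norm_eq_one_iff.mp h1)

lemma descent : ∀ (Y : ℕ) (ξ : ℤi) (dZ : ℤ),
    ξ.norm = dZ * (Y : ℤ)^2 → Odd Y →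
    (∀ q : ℤ, Prime q → ¬ ((q : ℤi) ∣ ξ)) →
    ∃ α β : ℤi, ξ = α * β^2 ∧ α.norm = dZ := by
  intro Y
  induction Y using Nat.strong_induction_on with
  | _ Y ih =>
    intro ξ dZ hnorm hodd hnd
    rcases eq_or_ne Y 1 with rfl | hY1
    · exact ⟨ξ, 1, by ring, by simpa using hnorm⟩
    have hY0 : Y ≠ 0 := by rintro rfl; simp [Nat.odd_iff] at hodd
    set q : ℕ := Y.minFac with hqdef
    have hqp : q.Prime := Nat.minFac_prime hY1
    have hqY : q ∣ Y := Nat.minFac_dvd Y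

    have hqodd : Odd q := by
      rcases hqp.eq_two_or_odd' with h2 | h
      · exfalso
        rw [Nat.odd_iff] at hodd
        obtain ⟨k, hk⟩ := h2 ▸ hqY
        omega
      · exact h
    have hqZp : Prime (q : ℤ) := Nat.prime_iff_prime_int.mp hqp
    set c : ℤi := ((q : ℤ) : ℤi) with hcdef
    -- c divides ξ * star ξ
    have hqnorm : (q : ℤ) ∣ ξ.norm := by
      rw [hnorm]
      exact Dvd.dvd.mul_left (dvd_pow (Int.natCast_dvd_natCast.mpr hqY) two_ne_zero) dZ
    have hcdvd : c ∣ ξ * star ξ := by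
      rw [← Zsqrtd.norm_eq_mul_conj]
      exact (Zsqrtd.intCast_dvd_intCast _ _).mpr hqnorm
    -- c is not prime in ℤi
    have hcnp : ¬ Prime c := by
      intro hc
      rcases hc.2.2 _ _ hcdvd with h1 | h1
      · exact hnd _ hqZp h1
      · have h2 : star c ∣ star (star ξ) := dvd_star h1
        rw [star_star, hcdef, star_intCast] at h2
        exact hnd _ hqZp h2
    have hcne : c ≠ 0 := by
      simp only [hcdef, ne_eq, Int.cast_eq_zero, Nat.cast_eq_zero]
      exact hqp.ne_zero
    have hcnu : ¬ IsUnit c := by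
      rw [← Zsqrtd.norm_eq_one_iff]
      have : c.norm = (q : ℤ) * (q : ℤ) := by
        simp [hcdef, Zsqrtd.norm_def]
      rw [this, Int.natAbs_mul, Int.natAbs_natCast]
      intro hcon
      have := Nat.eq_one_of_mul_eq_one_left hcon
      exact hqp.one_lt.ne' this
    -- factor c
    have hcirr : ¬ Irreducible c := fun hi => hcnp (irreducible_iff_prime.mp hi)
    rw [irreducible_iff] at hcirr
    push_neg at hcirr
    obtain ⟨s, t, hst, hsu, htu⟩ := hcirr hcnu
    -- norms
    have hnormc : s.norm * t.norm = (q : ℤ) * (q : ℤ) := by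
      rw [← Zsqrtd.norm_mul, ← hst]
      simp [hcdef, Zsqrtd.norm_def]
    have hns : s.norm.natAbs = q := by
      have h1 : s.norm.natAbs * t.norm.natAbs = q ^ 2 := by
        rw [← Int.natAbs_mul, hnormc]
        simp [Int.natAbs_mul, sq]
      have h2 : s.norm.natAbs ∣ q ^ 2 := Dvd.intro _ h1
      rw [Nat.dvd_prime_pow hqp] at h2
      obtain ⟨k, hk2, hkeq⟩ := h2
      interval_cases k
      · exfalso; exact hsu (Zsqrtd.norm_eq_one_iff.mp (by simpa using hkeq))
      · simpa using hkeq
      · exfalso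
        apply htu
        apply Zsqrtd.norm_eq_one_iff.mp
        rw [hkeq] at h1
        have hq0 : q ^ 2 ≠ 0 := pow_ne_zero _ hqp.ne_zero
        have := Nat.eq_of_mul_eq_mul_left (Nat.pos_of_ne_zero hq0) (by omega : q ^ 2 * t.norm.natAbs = q ^ 2 * 1)
        exact this
    have hsnorm : s.norm = (q : ℤ) := by
      have h3 := Int.natAbs_of_nonneg (Zsqrtd.norm_nonneg (by norm_num) s)
      rw [← h3, hns]
    -- obtain a prime sigma of norm q dividing xi
    have hssc : s * star s = c := by
      have := Zsqrtd.norm_eq_mul_conj s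
      rw [hsnorm] at this
      exact this.symm
    have hmain : ∃ σ : ℤi, σ.norm = (q : ℤ) ∧ σ * star σ = c ∧ σ ∣ ξ := by
      have hsp : Prime s := prime_of_norm_prime (hsnorm ▸ hqZp)
      have hsdc : s ∣ ξ * star ξ := dvd_trans ⟨star s, hssc.symm⟩ hcdvd
      rcases hsp.2.2 _ _ hsdc with h1 | h1
      · exact ⟨s, hsnorm, hssc, h1⟩
      · refine ⟨star s, by rw [Zsqrtd.norm_conj, hsnorm], by rw [star_star, mul_comm, hssc], ?_⟩
        have h2 := dvd_star h1
        rwa [star_star] at h2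
    obtain ⟨σ, hσn, hσc, hσξ⟩ := hmain
    have hσp : Prime σ := prime_of_norm_prime (hσn ▸ hqZp)
    have hσsp : Prime (star σ) := prime_of_norm_prime (by rw [Zsqrtd.norm_conj, hσn]; exact hqZp)
    have hq2Z : (2 : ℤ) ≤ (q : ℤ) := by exact_mod_cast hqp.two_le
    -- star σ does not divide σ
    have hnotds : ¬ star σ ∣ σ := by
      intro hss
      have hre : star σ ∣ ((2 * σ.re : ℤ) : ℤi) := by
        have he : σ + star σ = ((2 * σ.re : ℤ) : ℤi) := by
          ext <;> simp <;> ring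
        exact he ▸ dvd_add hss dvd_rfl
      have him : star σ ∣ (⟨0, 2 * σ.im⟩ : ℤi) := by
        have he : σ - star σ = (⟨0, 2 * σ.im⟩ : ℤi) := by
          ext <;> simp <;> ring
        exact he ▸ dvd_sub hss dvd_rfl
      have hdre : (q : ℤ) ∣ (2 * σ.re) * (2 * σ.re) := by
        have := norm_dvd_of_dvd hre
        rwa [Zsqrtd.norm_conj, hσn, Zsqrtd.norm_intCast] at this
      have hdim : (q : ℤ) ∣ (2 * σ.im) * (2 * σ.im) := by
        have := norm_dvd_of_dvd him
        rw [Zsqrtd.norm_conj, hσn] at this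
        simpa [Zsqrtd.norm_def] using this
      have hq2 : ¬ ((q : ℤ) ∣ 2) := by
        intro hd2
        have hn2 : q ∣ 2 := by exact_mod_cast hd2
        have hle := Nat.le_of_dvd (by norm_num) hn2
        have h2le := hqp.two_le
        rw [Nat.odd_iff] at hqodd
        omega
      have hqre : (q : ℤ) ∣ σ.re := by
        rcases hqZp.2.2 _ _ hdre with h1 | h1 <;>
        · rcases hqZp.2.2 _ _ h1 with h2 | h2
          · exact absurd h2 hq2
          · exact h2
      have hqim : (q : ℤ) ∣ σ.im := by
        rcases hqZp.2.2 _ _ hdim with h1 | h1 <;>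
        · rcases hqZp.2.2 _ _ h1 with h2 | h2
          · exact absurd h2 hq2
          · exact h2
      obtain ⟨u, hu⟩ := hqre
      obtain ⟨v, hv⟩ := hqim
      have hnq : σ.re * σ.re + σ.im * σ.im = (q : ℤ) := by
        have := hσn
        rw [Zsqrtd.norm_def] at this
        linarith
      have h1 : (q : ℤ) ∣ 1 := by
        refine ⟨u * u + v * v, ?_⟩
        have hqne : (q : ℤ) ≠ 0 := by positivity
        apply mul_left_cancel₀ hqne
        rw [hu, hv] at hnq
        linear_combination -hnq
      have := Int.le_of_dvd one_pos h1
      linarith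
    -- star σ does not divide ξ
    have hnotdξ : ¬ star σ ∣ ξ := by
      intro hsx
      obtain ⟨c₁, hc₁⟩ := hσξ
      rw [hc₁] at hsx
      rcases hσsp.2.2 _ _ hsx with h1 | h1
      · exact hnotds h1
      · obtain ⟨c₂, hc₂⟩ := h1
        refine hnd _ hqZp ?_
        refine ⟨c₂, ?_⟩
        show ξ = c * c₂
        rw [← hσc, hc₁, hc₂]
        ring
    -- σ^2 divides ξ
    have hc2 : c ^ 2 ∣ ξ * star ξ := by
      rw [← Zsqrtd.norm_eq_mul_conj]
      have hq2n : ((q : ℤ) ^ 2) ∣ ξ.norm := by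
        rw [hnorm]
        exact Dvd.dvd.mul_left (pow_dvd_pow_of_dvd (Int.natCast_dvd_natCast.mpr hqY) 2) dZ
      have : (((q : ℤ) ^ 2 : ℤ) : ℤi) ∣ (ξ.norm : ℤi) := (Zsqrtd.intCast_dvd_intCast _ _).mpr hq2n
      simpa [hcdef] using this
    have hss2 : (star σ) ^ 2 ∣ ξ * star ξ :=
      dvd_trans (pow_dvd_pow_of_dvd ⟨σ, by rw [← hσc]; ring⟩ 2) hc2
    have hstar2 : (star σ) ^ 2 ∣ star ξ := hσsp.pow_dvd_of_dvd_mul_left 2 hnotdξ hss2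
    have hσ2ξ : σ ^ 2 ∣ ξ := by
      have h3 := dvd_star hstar2
      rwa [star_pow, star_star, star_star] at h3
    -- descend
    obtain ⟨ξ', hξ'⟩ := hσ2ξ
    obtain ⟨Y', hYY⟩ := hqY
    have hY'0 : Y' ≠ 0 := by rintro rfl; exact hY0 (by omega)
    have hY'lt : Y' < Y := by
      have h2 := hqp.two_le
      rw [hYY]
      calc Y' = 1 * Y' := (one_mul Y').symm
      _ < q * Y' := by
        have h0 : 0 < Y' := Nat.pos_of_ne_zero hY'0
        exact Nat.mul_lt_mul_of_lt_of_le (by omega) (le_refl Y') h0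
    have hY'odd : Odd Y' := (Nat.odd_mul.mp (hYY ▸ hodd)).2
    have hnorm' : ξ'.norm = dZ * (Y' : ℤ)^2 := by
      have h1 : (q : ℤ) * (q : ℤ) * ξ'.norm = dZ * ((q : ℤ) * (Y' : ℤ))^2 := by
        have h2 : (Y : ℤ) = (q : ℤ) * (Y' : ℤ) := by exact_mod_cast congrArg (Nat.cast : ℕ → ℤ) hYY
        rw [hξ', sq, Zsqrtd.norm_mul, Zsqrtd.norm_mul, hσn] at hnorm
        rw [← h2]
        linear_combination hnorm
      have hqne : (q : ℤ) * (q : ℤ) ≠ 0 := by positivity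
      apply mul_left_cancel₀ hqne
      linear_combination h1
    have hnd' : ∀ r : ℤ, Prime r → ¬ ((r : ℤi) ∣ ξ') := by
      intro r hr hdr
      exact hnd r hr (hdr.trans ⟨σ ^ 2, by rw [hξ']; ring⟩)
    obtain ⟨α, β, hab, hα⟩ := ih Y' hY'lt ξ' dZ hnorm' hY'odd hnd'
    exact ⟨α, σ * β, by rw [hξ', hab]; ring, hα⟩

end NegPellAux

theorem negPell_quadratic_residue (d : ℕ) (hd : 0 < d) (hsf : Squarefree d)
    (h : ∃ x y : ℤ, x^2 - (d : ℤ)*y^2 = -1) :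
    ∃ a b : ℤ, (d : ℤ) = a^2 + b^2 ∧ Odd a ∧
      ∀ p : ℕ, p.Prime → p ∣ d → ∃ z : ZMod p, z^2 = (a : ZMod p) := by
  obtain ⟨x, y, hxy⟩ := h
  set Y : ℕ := y.natAbs with hYdef
  have hyY : (Y : ℤ)^2 = y^2 := by
    rw [hYdef, Int.natAbs_sq]
  have hkey : x^2 + 1 = (d : ℤ) * (Y : ℤ)^2 := by
    rw [hyY]; linarith
  -- Y is odd
  have hYodd : Odd Y := by
    rw [Nat.odd_iff]
    by_contra hcon
    have h2Y : 2 ∣ Y := by omega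
    obtain ⟨k, hk⟩ := h2Y
    have hz : ((x : ZMod 4))^2 + 1 = 0 := by
      have hcast := congrArg (fun t : ℤ => (t : ZMod 4)) hkey
      push_cast at hcast
      rw [hcast, hk]
      push_cast
      ring_nf
      rw [show (4 : ZMod 4) = 0 by decide]
      ring
    have : ∀ u : ZMod 4, u^2 + 1 ≠ 0 := by decide
    exact this _ hz
  -- the Gaussian integer x + i
  set ξ : GaussianInt := ⟨x, 1⟩ with hξdef
  have hξnorm : ξ.norm = (d : ℤ) * (Y : ℤ)^2 := by
    rw [Zsqrtd.norm_def, ← hkey]; ring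
  have hnd : ∀ q : ℤ, Prime q → ¬ ((q : GaussianInt) ∣ ξ) := by
    intro q hq hdvd
    rw [Zsqrtd.intCast_dvd] at hdvd
    have : q ∣ 1 := hdvd.2
    exact hq.not_unit (isUnit_of_dvd_one this)
  obtain ⟨α, β, hfac, hα⟩ := NegPellAux.descent Y ξ (d : ℤ) hξnorm hYodd hnd
  set a := α.re with hadef
  set b := α.im with hbdef
  set m := β.re with hmdef
  set n := β.im with hndef
  have hare : a^2 + b^2 = (d : ℤ) := by
    rw [Zsqrtd.norm_def] at hα
    linarith [hα]
  have him : 1 = a * (m*n + n*m) + b * (m*m + (-1) * (n*n)) := by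
    have := congrArg Zsqrtd.im hfac
    simpa [hξdef, sq, Zsqrtd.im_mul, Zsqrtd.re_mul, mul_comm, mul_assoc, mul_left_comm] using this
  have hre : x = a * (m*m + (-1) * (n*n)) - b * (m*n + n*m) := by
    have := congrArg Zsqrtd.re hfac
    simp [hξdef, sq, Zsqrtd.im_mul, Zsqrtd.re_mul] at this
    linarith [this]
  have hbodd : Odd b := by
    have h1 : Odd (b * (m*m - n*n)) := by
      refine ⟨-(a*m*n), by linarith [him]⟩
    exact (Int.odd_mul.mp h1).1
  have hdne : (d : ℤ) ≠ 0 := by positivity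
  -- key identity
  have hdM : a*x + b = (d : ℤ) * (m*m - n*n) := by
    linear_combination a*hre + b*him + (m*m - n*n)*hare
  have hdN : a - b*x = (d : ℤ) * (2*m*n) := by
    linear_combination a*him - b*hre + (2*m*n)*hare
  have hMN : (m^2 - n^2) - x * (2*m*n) = b * (Y : ℤ)^2 := by
    apply mul_left_cancel₀ hdne
    linear_combination -hdM + x*hdN + b*hkey
  have hsq : (m - x*n)^2 = (Y : ℤ)^2 * (b + (d : ℤ) * n^2) := by
    linear_combination hMN + n^2 * hkey
  have hYdvd : (Y : ℤ) ∣ (m - x*n) := by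
    rw [← Int.pow_dvd_pow_iff (two_ne_zero)]
    exact ⟨b + (d : ℤ) * n^2, hsq⟩
  obtain ⟨w, hw⟩ := hYdvd
  have hYne : (Y : ℤ) ≠ 0 := by
    rintro hY0
    rw [hY0] at hkey
    nlinarith [sq_nonneg x]
  have hbw : b = w^2 - (d : ℤ) * n^2 := by
    have h1 : (Y:ℤ)^2 * (w^2 - b - (d : ℤ)*n^2) = 0 := by
      rw [hw] at hsq
      linear_combination hsq  -- check sign
    have h2 := mul_eq_zero.mp h1
    rcases h2 with h2 | h2
    · exact absurd (pow_eq_zero_iff two_ne_zero |>.mp h2) hYne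
    · linarith
  refine ⟨b, a, by linarith, hbodd, ?_⟩
  intro p pp pd
  refine ⟨(w : ZMod p), ?_⟩
  have hp0 : ((d : ℕ) : ZMod p) = 0 := (ZMod.natCast_eq_zero_iff _ _).mpr pd
  have := congrArg (fun t : ℤ => (t : ZMod p)) hbw
  push_cast at this
  rw [this, hp0]
  ring
end
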